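/- Let n ≥ 1 and let I_n ⊆ ℤ[X] be the ideal generated by {C(n,j)·X^j : 1 ≤ j ≤ n}. Then the underlying additive group of the quotient ring ℤ[X]/I_n is isomorphic to ℤ ⊕ (ℤ/b_{n,1}ℤ) ⊕ (ℤ/b_{n,2}ℤ) ⊕ ⋯ ⊕ (ℤ/b_{n,n−1}ℤ), where b_{n,r} := gcd{C(n,1), C(n,2), …, C(n,r)}; the free summand is generated by the class of 1 and the summand ℤ/b_{n,r}ℤ is generated by the class of X^r. -/

import Mathlib

open Polynomial

/-- `bnr n r = gcd {C(n,1), …, C(n,r)}`. -/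
def bnr (n r : ℕ) : ℕ := (Finset.Icc 1 r).gcd (n.choose ·)

/-- `In n` is the ideal of `ℤ[X]` generated by `{C(n,j)·X^j : 1 ≤ j ≤ n}`. -/
noncomputable def In (n : ℕ) : Ideal (Polynomial ℤ) :=
  Ideal.span {p : Polynomial ℤ | ∃ j : ℕ, 1 ≤ j ∧ j ≤ n ∧ p = (n.choose j : ℤ) • X ^ j}

/-!
A polynomial lies in `I_n` exactly when its `m`-th coefficient is divisible by `b_{n,m}` for
every `m`, where `b_{n,0} = 0` (the gcd of the empty family). These polynomials form an ideal
because `b_{n,m} ∣ b_{n,k}` for `k ≤ m`, and it contains the generators `C(n,j) X^j`. Conversely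
`b_{n,m} X^m ∈ I_n`, since `b_{n,m}` is a ℤ-combination of the `C(n,j)` with `j ≤ m` and
`C(n,j) X^m = X^{m-j} · C(n,j) X^j`. As `b_{n,m} = 1` for `m ≥ n`, reading off the constant
coefficient and the coefficient of `X^r` modulo `b_{n,r}` for `1 ≤ r < n` is a surjective
additive map `ℤ[X] → ℤ ⊕ ⨁ ℤ/b_{n,r}` with kernel `I_n`.
-/

namespace Polynomial

variable {R : Type*} [CommSemiring R]

def coeffDvdIdeal (d : ℕ → R) (hd : ∀ {k m}, k ≤ m → d m ∣ d k) : Ideal R[X] where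
  carrier := {p | ∀ m, d m ∣ p.coeff m}
  zero_mem' := by simp
  add_mem' hp hq m := by simpa only [coeff_add] using dvd_add (hp m) (hq m)
  smul_mem' p q hq m := by
    rw [smul_eq_mul, coeff_mul]
    refine Finset.dvd_sum fun x hx => ?_
    exact ((hd (Finset.HasAntidiagonal.antidiagonal.snd_le hx)).trans (hq x.2)).mul_left _

theorem mem_coeffDvdIdeal {d : ℕ → R} {hd : ∀ {k m}, k ≤ m → d m ∣ d k} {p : R[X]} :
    p ∈ coeffDvdIdeal d hd ↔ ∀ m, d m ∣ p.coeff m := Iff.rfl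

end Polynomial

theorem Int.natCast_finset_gcd_mem {ι : Type*} {I : Ideal ℤ} {s : Finset ι} {f : ι → ℕ}
    (h : ∀ i ∈ s, (f i : ℤ) ∈ I) : ((s.gcd f : ℕ) : ℤ) ∈ I := by
  obtain ⟨g, rfl⟩ := (Submodule.IsPrincipal.principal I : ∃ g, I = Ideal.span {g})
  simp only [Ideal.mem_span_singleton, Int.dvd_natCast] at h ⊢
  exact Finset.dvd_gcd h

theorem bnr_dvd_choose (n : ℕ) {j m : ℕ} (h1 : 1 ≤ j) (hj : j ≤ m) :
    bnr n m ∣ n.choose j :=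
  Finset.gcd_dvd (Finset.mem_Icc.mpr ⟨h1, hj⟩)

theorem bnr_dvd_bnr (n : ℕ) {k m : ℕ} (h : k ≤ m) : bnr n m ∣ bnr n k :=
  Finset.dvd_gcd fun _ hj =>
    bnr_dvd_choose n (Finset.mem_Icc.mp hj).1 ((Finset.mem_Icc.mp hj).2.trans h)

theorem bnr_eq_one {n m : ℕ} (hn : 1 ≤ n) (hm : n ≤ m) : bnr n m = 1 :=
  Nat.dvd_one.mp (by simpa using bnr_dvd_choose n hn hm)

theorem choose_smul_X_pow_mem_In (n : ℕ) {j : ℕ} (hj : 1 ≤ j) :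
    (n.choose j : ℤ) • (X : ℤ[X]) ^ j ∈ In n := by
  rcases le_or_gt j n with hjn | hnj
  · exact Ideal.subset_span ⟨j, hj, hjn, rfl⟩
  · simp [Nat.choose_eq_zero_of_lt hnj]

theorem monomial_bnr_mem_In (n m : ℕ) : monomial m (bnr n m : ℤ) ∈ In n := by
  let I : Ideal ℤ := ((In n).restrictScalars ℤ).comap (monomial m)
  refine Int.natCast_finset_gcd_mem (I := I) fun j hj => ?_
  obtain ⟨hj1, hjm⟩ := Finset.mem_Icc.mp hj
  have : monomial m (n.choose j : ℤ) = X ^ (m - j) * ((n.choose j : ℤ) • X ^ j) := by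
    rw [smul_eq_C_mul, mul_left_comm, ← pow_add, Nat.sub_add_cancel hjm, C_mul_X_pow_eq_monomial]
  show monomial m (n.choose j : ℤ) ∈ In n
  rw [this]
  exact (In n).mul_mem_left _ (choose_smul_X_pow_mem_In n hj1)

theorem In_eq_coeffDvdIdeal (n : ℕ) :
    In n = coeffDvdIdeal (fun m => (bnr n m : ℤ))
      (fun h => Int.natCast_dvd_natCast.mpr (bnr_dvd_bnr n h)) := by
  refine le_antisymm (Ideal.span_le.mpr ?_) fun p hp => ?_
  · rintro _ ⟨j, hj1, -, rfl⟩ m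
    rw [coeff_smul, coeff_X_pow]
    split_ifs with h
    · subst h; simpa using Int.natCast_dvd_natCast.mpr (bnr_dvd_choose n hj1 le_rfl)
    · simp
  · rw [p.as_sum_support]
    refine Ideal.sum_mem _ fun m _ => ?_
    obtain ⟨c, hc⟩ := hp m
    rw [hc, mul_comm, ← C_mul_monomial]
    exact (In n).mul_mem_left _ (monomial_bnr_mem_In n m)

noncomputable def coeffModBnr (n : ℕ) :
    ℤ[X] →+ (ℤ × ((r : Fin (n - 1)) → ZMod (bnr n (r.1 + 1)))) :=
  (lcoeff ℤ 0).toAddMonoidHom.prod <| AddMonoidHom.pi fun r : Fin (n - 1) =>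
    (Int.castAddHom _).comp (lcoeff ℤ (r.1 + 1)).toAddMonoidHom

theorem coeffModBnr_apply (n : ℕ) (p : ℤ[X]) :
    coeffModBnr n p =
      (p.coeff 0, fun r : Fin (n - 1) => (p.coeff (r.1 + 1) : ZMod (bnr n (r.1 + 1)))) :=
  rfl

theorem coeffModBnr_one (n : ℕ) : coeffModBnr n 1 = (1, 0) := by
  ext r <;> simp [coeffModBnr_apply, coeff_one]

theorem coeffModBnr_X_pow (n : ℕ) (r : Fin (n - 1)) :
    coeffModBnr n (X ^ (r.1 + 1)) = (0, Pi.single r 1) := by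
  ext s
  · simp [coeffModBnr_apply, coeff_X_pow]
  · rcases eq_or_ne s r with rfl | h
    · simp [coeffModBnr_apply]
    · simp [coeffModBnr_apply, coeff_X_pow, h, Fin.val_ne_of_ne h]

theorem coeffModBnr_eq_zero_iff {n : ℕ} (hn : 1 ≤ n) (p : ℤ[X]) :
    coeffModBnr n p = 0 ↔ p ∈ In n := by
  rw [In_eq_coeffDvdIdeal, mem_coeffDvdIdeal, coeffModBnr_apply, Prod.mk_eq_zero, funext_iff]
  simp only [Pi.zero_apply, ZMod.intCast_zmod_eq_zero_iff_dvd]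
  constructor
  · rintro ⟨h0, h⟩ (_ | m)
    · simp [h0]
    · rcases lt_or_ge m (n - 1) with hm | hm
      · exact h ⟨m, hm⟩
      · simp [bnr_eq_one hn (by omega : n ≤ m + 1)]
  · intro h
    exact ⟨by simpa [bnr] using h 0, fun r => h (r.1 + 1)⟩

theorem coeffModBnr_surjective (n : ℕ) : Function.Surjective (coeffModBnr n) := by
  rintro ⟨a, v⟩
  refine ⟨a • 1 + ∑ r, ((v r).cast : ℤ) • X ^ (r.1 + 1), ?_⟩
  simp only [map_add, map_zsmul, map_sum, coeffModBnr_one, coeffModBnr_X_pow]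
  rw [Prod.ext_iff]
  simp only [Prod.fst_add, Prod.snd_add, Prod.fst_sum, Prod.snd_sum, Prod.smul_mk, smul_zero,
    ← Pi.single_smul, zsmul_one, ZMod.intCast_zmod_cast, Finset.univ_sum_single]
  simp

/-- The additive group of `ℤ[X]/I_n` is isomorphic to
`ℤ ⊕ (ℤ/b_{n,1}) ⊕ ⋯ ⊕ (ℤ/b_{n,n-1})`, where the free summand is generated by the
class of `1` and the summand `ℤ/b_{n,r}` is generated by the class of `X^r`. -/
theorem quotient_In_additive_structure (n : ℕ) (hn : 1 ≤ n) :
    ∃ φ : (Polynomial ℤ ⧸ In n) ≃+ (ℤ × ((r : Fin (n - 1)) → ZMod (bnr n (r.1 + 1)))),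
      φ (Ideal.Quotient.mk (In n) 1) = (1, 0) ∧
      ∀ r : Fin (n - 1),
        φ (Ideal.Quotient.mk (In n) (X ^ (r.1 + 1))) = (0, Pi.single r 1) := by
  have hker : (In n).toAddSubgroup = (coeffModBnr n).ker :=
    AddSubgroup.ext fun p => (coeffModBnr_eq_zero_iff hn p).symm
  let φ := (QuotientAddGroup.quotientAddEquivOfEq hker).trans
    (QuotientAddGroup.quotientKerEquivOfSurjective _ (coeffModBnr_surjective n))
  have hφ (p : ℤ[X]) : φ (Ideal.Quotient.mk (In n) p) = coeffModBnr n p := rfl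
  exact ⟨φ, (hφ 1).trans (coeffModBnr_one n), fun r => (hφ _).trans (coeffModBnr_X_pow n r)⟩
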